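/- arXiv:2307.05312 — 2 statements merged into one kernel-verified Lean document; each statement's English description precedes it below -/
import Mathlib

section
/- Let T₀, T₁, R₀ᴬ, R₁ᴬ, R₀ᴮ, R₀ᴰ, T_γ, ρ ∈ ℝ with T₁ ≠ 0, h > 0, ε ∈ {−1, 1}. Define A = [[T₀+2T₁+R₀ᴬ+4R₁ᴬ, −T₀+2T₁−R₀ᴬ, 0], [−T₀+2T₁−R₀ᴬ, T₀+2T₁+R₀ᴬ−4R₁ᴬ, 0], [0, 0, 2(T₀−R₀ᴬ)]], D = [[T₀+2T₁+R₀ᴰ, −T₀+2T₁−R₀ᴰ, 0], [−T₀+2T₁−R₀ᴰ, T₀+2T₁+R₀ᴰ, 0], [0, 0, 2(T₀−R₀ᴰ)]] (so R₁ᴰ = 0), B = [[R₀ᴮ, −R₀ᴮ, 0], [−R₀ᴮ, R₀ᴮ, 0], [0, 0, −2R₀ᴮ]], U = (T_γ+ε·ρ·R₁ᴬ, T_γ−ε·ρ·R₁ᴬ, 0), V = (0,0,0), W = (T_γ, T_γ, 0). Assume A, D, A − 3·B·D⁻¹·B and D − 3·B·A⁻¹·B are invertible. Then w = (T_γ/(4T₁))·(1,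 1, 0), v₂ = (0, 0, 0), and v₁ is purely anisotropic: (v₁)₁ + (v₁)₂ = 0 and (v₁)₆ = 0. In words: such a laminate is an extension-free thermally stable laminate — a uniform temperature change warps the plate (without mean in-plane dilatation from coupling), while a temperature gradient produces an isotropic curvature and no in-plane stretching. -/
/-!
The vector `e = (1, 1, 0)` lies in the kernel of `B` and is an eigenvector of `D` (eigenvalue
`4 T₁`, because `R₁ᴰ = 0`); hence it is an eigenvector of `𝒟` with eigenvalue `1 / (4 T₁)` and
is killed by `ℬ = -3 𝒜 B D⁻¹`. Since `W` is a multiple of `e`, this gives `w` and `v₂`.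
For `v₁ = (2/h) ℬᵀ U`, symmetry gives `ℬᵀ = -3 D⁻¹ B 𝒜`. The shear direction `g = (0, 0, 1)` is
a common eigenvector of `A`, `B`, `D`, hence of the symmetric matrix `𝒜`, so `𝒜 U ⊥ g` as
`U ⊥ g`; `B` maps `g^⊥` into the line of `f = (1, -1, 0)`, which is again an eigenvector of
`D⁻¹`. So `v₁` is a multiple of `f`.
-/

open Matrix

namespace Matrix

variable {n K : Type*} [Fintype n]

section CommRing

variable [CommRing K]

theorem sub_smul_mul_mul_mulVec_of_mulVec_eq_zero (A B Y : Matrix n n K) (k : K) {x : n → K}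
    (hB : B *ᵥ x = 0) : (A - k • (B * Y * B)) *ᵥ x = A *ᵥ x := by
  rw [sub_mulVec, smul_mulVec, ← mulVec_mulVec, hB, mulVec_zero, smul_zero, sub_zero]

theorem IsSymm.dotProduct_mulVec_eq_zero {M : Matrix n n K} (hM : M.IsSymm) {g u : n → K}
    {c : K} (hg : M *ᵥ g = c • g) (hu : g ⬝ᵥ u = 0) : g ⬝ᵥ (M *ᵥ u) = 0 := by
  rw [dotProduct_mulVec, ← mulVec_transpose, hM.eq, hg, smul_dotProduct, hu, smul_zero]

variable [DecidableEq n]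

theorem IsSymm.sub_smul_mul_inv_mul {A B D : Matrix n n K} (hA : A.IsSymm) (hB : B.IsSymm)
    (hD : D.IsSymm) (k : K) : (A - k • (B * D⁻¹ * B)).IsSymm := by
  refine hA.sub (IsSymm.smul ?_ k)
  rw [IsSymm, transpose_mul, transpose_mul, hB.eq, hD.inv.eq, Matrix.mul_assoc]

theorem transpose_mul_mul_inv {X B D : Matrix n n K} (hX : X.IsSymm) (hB : B.IsSymm)
    (hD : D.IsSymm) : (X * B * D⁻¹)ᵀ = D⁻¹ * (B * X) := by
  rw [transpose_mul, transpose_mul, hX.eq, hB.eq, hD.inv.eq]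

end CommRing

variable [DecidableEq n] [Field K]

theorem inv_mulVec_eq_inv_smul {M : Matrix n n K} (hM : IsUnit M.det) {x : n → K} {c : K}
    (h : M *ᵥ x = c • x) : M⁻¹ *ᵥ x = c⁻¹ • x := by
  have hx : c • M⁻¹ *ᵥ x = x := by
    rw [← mulVec_smul, ← h, mulVec_mulVec, nonsing_inv_mul _ hM, one_mulVec]
  rcases eq_or_ne c 0 with rfl | hc
  · rw [zero_smul] at hx
    simp [← hx]
  · rwa [eq_inv_smul_iff₀ hc]

theorem sub_smul_mul_inv_mul_mulVec_eq_smul {A B D : Matrix n n K} (hD : IsUnit D.det) (k : K)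
    {x : n → K} {a b d : K} (hAx : A *ᵥ x = a • x) (hBx : B *ᵥ x = b • x)
    (hDx : D *ᵥ x = d • x) :
    (A - k • (B * D⁻¹ * B)) *ᵥ x = (a - k * b * d⁻¹ * b) • x := by
  rw [sub_mulVec, smul_mulVec, ← mulVec_mulVec, ← mulVec_mulVec, hBx, mulVec_smul,
    inv_mulVec_eq_inv_smul hD hDx, mulVec_smul, mulVec_smul, hBx, hAx, smul_smul, smul_smul,
    smul_smul, ← sub_smul]

end Matrix

namespace OrthotropicLaminate

/- Polar representation of the stiffness matrices in Kelvin notation, in the frame where all polar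
angles vanish; `stiffB` and `stiffD` have `R₁ = 0`. -/

def stiffA (T₀ T₁ R₀ R₁ : ℝ) : Matrix (Fin 3) (Fin 3) ℝ :=
  !![T₀ + 2*T₁ + R₀ + 4*R₁, -T₀ + 2*T₁ - R₀, 0;
     -T₀ + 2*T₁ - R₀, T₀ + 2*T₁ + R₀ - 4*R₁, 0;
     0, 0, 2*(T₀ - R₀)]

def stiffB (R₀ : ℝ) : Matrix (Fin 3) (Fin 3) ℝ :=
  !![R₀, -R₀, 0; -R₀, R₀, 0; 0, 0, -2*R₀]

def stiffD (T₀ T₁ R₀ : ℝ) : Matrix (Fin 3) (Fin 3) ℝ :=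
  !![T₀ + 2*T₁ + R₀, -T₀ + 2*T₁ - R₀, 0;
     -T₀ + 2*T₁ - R₀, T₀ + 2*T₁ + R₀, 0;
     0, 0, 2*(T₀ - R₀)]

variable (T₀ T₁ R₀ R₁ : ℝ)

theorem isSymm_stiffA : (stiffA T₀ T₁ R₀ R₁).IsSymm := by
  ext i j; fin_cases i <;> fin_cases j <;> simp [stiffA]

theorem isSymm_stiffB : (stiffB R₀).IsSymm := by
  ext i j; fin_cases i <;> fin_cases j <;> simp [stiffB]

theorem isSymm_stiffD : (stiffD T₀ T₁ R₀).IsSymm := by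
  ext i j; fin_cases i <;> fin_cases j <;> simp [stiffD]

theorem stiffB_mulVec_iso : stiffB R₀ *ᵥ ![1, 1, 0] = 0 := by
  ext i; fin_cases i <;> simp [stiffB, mulVec, dotProduct, Fin.sum_univ_three]

theorem stiffD_mulVec_iso : stiffD T₀ T₁ R₀ *ᵥ ![1, 1, 0] = (4 * T₁) • ![1, 1, 0] := by
  ext i; fin_cases i <;> simp [stiffD, mulVec, dotProduct, Fin.sum_univ_three] <;> ring

theorem stiffD_mulVec_aniso :
    stiffD T₀ T₁ R₀ *ᵥ ![1, -1, 0] = (2 * (T₀ + R₀)) • ![1, -1, 0] := by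
  ext i; fin_cases i <;> simp [stiffD, mulVec, dotProduct, Fin.sum_univ_three] <;> ring

theorem stiffA_mulVec_shear :
    stiffA T₀ T₁ R₀ R₁ *ᵥ ![0, 0, 1] = (2 * (T₀ - R₀)) • ![0, 0, 1] := by
  ext i; fin_cases i <;> simp [stiffA, mulVec, dotProduct, Fin.sum_univ_three]

theorem stiffB_mulVec_shear : stiffB R₀ *ᵥ ![0, 0, 1] = (-2 * R₀) • ![0, 0, 1] := by
  ext i; fin_cases i <;> simp [stiffB, mulVec, dotProduct, Fin.sum_univ_three]

theorem stiffD_mulVec_shear :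
    stiffD T₀ T₁ R₀ *ᵥ ![0, 0, 1] = (2 * (T₀ - R₀)) • ![0, 0, 1] := by
  ext i; fin_cases i <;> simp [stiffD, mulVec, dotProduct, Fin.sum_univ_three]

theorem stiffB_mulVec_of_apply_two_eq_zero {y : Fin 3 → ℝ} (hy : y 2 = 0) :
    stiffB R₀ *ᵥ y = (R₀ * (y 0 - y 1)) • ![1, -1, 0] := by
  ext i; fin_cases i <;> simp [stiffB, mulVec, dotProduct, Fin.sum_univ_three, hy] <;> ring

end OrthotropicLaminate

open OrthotropicLaminate

theorem extension_free_thermally_stable_general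
    (T₀ T₁ R₀A R₁A R₀B R₀D Tγ ρ : ℝ) (h : ℝ)
    (ε : ℝ) :
    let A : Matrix (Fin 3) (Fin 3) ℝ :=
      !![T₀ + 2*T₁ + R₀A + 4*R₁A, -T₀ + 2*T₁ - R₀A, 0;
         -T₀ + 2*T₁ - R₀A, T₀ + 2*T₁ + R₀A - 4*R₁A, 0;
         0, 0, 2*(T₀ - R₀A)]
    let D : Matrix (Fin 3) (Fin 3) ℝ :=
      !![T₀ + 2*T₁ + R₀D, -T₀ + 2*T₁ - R₀D, 0;
         -T₀ + 2*T₁ - R₀D, T₀ + 2*T₁ + R₀D, 0;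
         0, 0, 2*(T₀ - R₀D)]
    let B : Matrix (Fin 3) (Fin 3) ℝ :=
      !![R₀B, -R₀B, 0; -R₀B, R₀B, 0; 0, 0, -2*R₀B]
    let U : Fin 3 → ℝ := ![Tγ + ε * ρ * R₁A, Tγ - ε * ρ * R₁A, 0]
    let V : Fin 3 → ℝ := 0
    let W : Fin 3 → ℝ := ![Tγ, Tγ, 0]
    let calA := (A - (3 : ℝ) • (B * D⁻¹ * B))⁻¹
    let calB := (-3 : ℝ) • (calA * B * D⁻¹)
    let calD := (D - (3 : ℝ) • (B * A⁻¹ * B))⁻¹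
    let v₁ := (2 / h) • (calB.transpose.mulVec U + (3 : ℝ) • calD.mulVec V)
    let v₂ := (h / 6) • ((3 : ℝ) • calA.mulVec V + calB.mulVec W)
    let w := calB.transpose.mulVec V + calD.mulVec W
    IsUnit A.det → IsUnit D.det →
    IsUnit (A - (3 : ℝ) • (B * D⁻¹ * B)).det →
    IsUnit (D - (3 : ℝ) • (B * A⁻¹ * B)).det →
      (w = (Tγ / (4 * T₁)) • (![1, 1, 0] : Fin 3 → ℝ) ∧
        v₂ = 0 ∧ v₁ 0 + v₁ 1 = 0 ∧ v₁ 2 = 0) := by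
  intro A D B U V W calA calB calD v₁ v₂ w _ hD hM₁ hM₂
  have hBsymm : B.IsSymm := isSymm_stiffB R₀B
  have hDsymm : D.IsSymm := isSymm_stiffD T₀ T₁ R₀D
  have hBe : B *ᵥ ![1, 1, 0] = 0 := stiffB_mulVec_iso R₀B
  have hW : W = Tγ • ![1, 1, 0] := by ext i; fin_cases i <;> simp [W]
  have hDe := inv_mulVec_eq_inv_smul hD (stiffD_mulVec_iso T₀ T₁ R₀D)
  have hcalDe : calD *ᵥ ![1, 1, 0] = (4 * T₁)⁻¹ • ![1, 1, 0] :=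
    inv_mulVec_eq_inv_smul hM₂ ((sub_smul_mul_mul_mulVec_of_mulVec_eq_zero D B A⁻¹ 3 hBe).trans
      (stiffD_mulVec_iso T₀ T₁ R₀D))
  have hcalAsymm : calA.IsSymm :=
    (IsSymm.sub_smul_mul_inv_mul (isSymm_stiffA T₀ T₁ R₀A R₁A) hBsymm hDsymm 3).inv
  have hcalAg := inv_mulVec_eq_inv_smul hM₁ (sub_smul_mul_inv_mul_mulVec_eq_smul hD 3
    (stiffA_mulVec_shear T₀ T₁ R₀A R₁A) (stiffB_mulVec_shear R₀B) (stiffD_mulVec_shear T₀ T₁ R₀D))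
  have hy : (calA *ᵥ U) 2 = 0 := by
    simpa [dotProduct, Fin.sum_univ_three] using
      hcalAsymm.dotProduct_mulVec_eq_zero hcalAg (by simp [U, dotProduct, Fin.sum_univ_three])
  have hBy : B *ᵥ (calA *ᵥ U) = _ := stiffB_mulVec_of_apply_two_eq_zero R₀B hy
  obtain ⟨c, hv₁⟩ : ∃ c : ℝ, v₁ = c • ![1, -1, 0] := by
    simp only [v₁, V, calB, mulVec_zero, smul_zero, add_zero, transpose_smul,
      transpose_mul_mul_inv hcalAsymm hBsymm hDsymm, smul_mulVec, ← mulVec_mulVec, hBy, mulVec_smul,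
      inv_mulVec_eq_inv_smul hD (stiffD_mulVec_aniso T₀ T₁ R₀D), smul_smul]
    exact ⟨_, rfl⟩
  refine ⟨?_, ?_, ?_⟩
  · simp only [w, V, mulVec_zero, zero_add, hW, mulVec_smul, hcalDe, smul_smul, div_eq_mul_inv]
  · simp only [v₂, V, calB, mulVec_zero, smul_zero, zero_add, hW, smul_mulVec, ← mulVec_mulVec,
      mulVec_smul, hDe, hBe]
  · rw [hv₁]; simp

theorem extension_free_thermally_stable
    (T₀ T₁ R₀A R₁A R₀B R₀D Tγ ρ : ℝ) (hT₁ : T₁ ≠ 0) (h : ℝ) (hh : 0 < h)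
    (ε : ℝ) (hε : ε = -1 ∨ ε = 1) :
    let A : Matrix (Fin 3) (Fin 3) ℝ :=
      !![T₀ + 2*T₁ + R₀A + 4*R₁A, -T₀ + 2*T₁ - R₀A, 0;
         -T₀ + 2*T₁ - R₀A, T₀ + 2*T₁ + R₀A - 4*R₁A, 0;
         0, 0, 2*(T₀ - R₀A)]
    let D : Matrix (Fin 3) (Fin 3) ℝ :=
      !![T₀ + 2*T₁ + R₀D, -T₀ + 2*T₁ - R₀D, 0;
         -T₀ + 2*T₁ - R₀D, T₀ + 2*T₁ + R₀D, 0;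
         0, 0, 2*(T₀ - R₀D)]
    let B : Matrix (Fin 3) (Fin 3) ℝ :=
      !![R₀B, -R₀B, 0; -R₀B, R₀B, 0; 0, 0, -2*R₀B]
    let U : Fin 3 → ℝ := ![Tγ + ε * ρ * R₁A, Tγ - ε * ρ * R₁A, 0]
    let V : Fin 3 → ℝ := 0
    let W : Fin 3 → ℝ := ![Tγ, Tγ, 0]
    let calA := (A - (3 : ℝ) • (B * D⁻¹ * B))⁻¹
    let calB := (-3 : ℝ) • (calA * B * D⁻¹)
    let calD := (D - (3 : ℝ) • (B * A⁻¹ * B))⁻¹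
    let v₁ := (2 / h) • (calB.transpose.mulVec U + (3 : ℝ) • calD.mulVec V)
    let v₂ := (h / 6) • ((3 : ℝ) • calA.mulVec V + calB.mulVec W)
    let w := calB.transpose.mulVec V + calD.mulVec W
    IsUnit A.det → IsUnit D.det →
    IsUnit (A - (3 : ℝ) • (B * D⁻¹ * B)).det →
    IsUnit (D - (3 : ℝ) • (B * A⁻¹ * B)).det →
      (w = (Tγ / (4 * T₁)) • (![1, 1, 0] : Fin 3 → ℝ) ∧
        v₂ = 0 ∧ v₁ 0 + v₁ 1 = 0 ∧ v₁ 2 = 0) :=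
  extension_free_thermally_stable_general T₀ T₁ R₀A R₁A R₀B R₀D Tγ ρ h ε
end

section
/- Let T₀, T₁, R₀ᴬ, R₀ᴰ, R₁ᴮ, T_γ, ρ ∈ ℝ, h > 0, ε ∈ {−1, 1}, with (R₀ᴬ+T₀)·T₁ − 6·(R₁ᴮ)² ≠ 0 and (R₀ᴰ+T₀)·T₁ − 6·(R₁ᴮ)² ≠ 0. Define A = [[T₀+2T₁+R₀ᴬ, −T₀+2T₁−R₀ᴬ, 0], [−T₀+2T₁−R₀ᴬ, T₀+2T₁+R₀ᴬ, 0], [0, 0, 2(T₀−R₀ᴬ)]], D the same with R₀ᴰ, B = [[4R₁ᴮ, 0, 0], [0, −4R₁ᴮ, 0], [0, 0, 0]], U = W = (T_γ, T_γ, 0), V = (ε·ρ·R₁ᴮ, −ε·ρ·R₁ᴮ, 0). Assume A, D, A − 3·B·D⁻¹·B and D − 3·B·A⁻¹·B are invertible. Then: u = t^u·(1,1,0) with t^u = ((R₀ᴰ+T₀)·T_γ − 6·ε·(R₁ᴮ)²·ρ)/(4·((R₀ᴰ+T₀)·T₁ − 6·(R₁ᴮ)²)); w = t^w·(1,1,0)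 with t^w = ((R₀ᴬ+T₀)·T_γ − 6·ε·(R₁ᴮ)²·ρ)/(4·((R₀ᴬ+T₀)·T₁ − 6·(R₁ᴮ)²)); and v₁ and v₂ are purely anisotropic: (v₁)₁ + (v₁)₂ = 0, (v₁)₆ = 0, (v₂)₁ + (v₂)₂ = 0, (v₂)₆ = 0. In words: for a coupled laminate with R₁ᴬ = R₁ᴰ = R₀ᴮ = 0 and V ≠ O (e.g. an antisymmetric balanced cross-ply laminate), the thermal expansion and curvature compliance tensors u and w are isotropic while the coupling tensors v₁ and v₂ are purely anisotropic. -/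
/-!
In Kelvin coordinates the isotropic line `(1, 1, 0)` and the anisotropic line `(1, -1, 0)` are
eigenlines of the square-symmetric stiffnesses `A` and `D` (eigenvalues `4 T₁` and `2 (T₀ + R₀)`),
while `B` exchanges them, up to the factor `4 R₁ᴮ`. Hence each line is an eigenline of the Schur
complements `A - 3 B D⁻¹ B`, `D - 3 B A⁻¹ B` and of their inverses `𝒜`, `𝒟`. Writing
`u = 𝒜 (U - 3 B D⁻¹ V)` and `v₂ ∝ 𝒜 (V - B D⁻¹ W)`, and, by the push-through identity
`𝒜 B D⁻¹ = A⁻¹ B 𝒟` and symmetry, `w = 𝒟 (W - 3 B A⁻¹ V)` and `v₁ ∝ 𝒟 (V - B A⁻¹ U)`, the vectors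
`u`, `w` stay on the isotropic line of `U = W` and `v₁`, `v₂` on the anisotropic line of `V`.
-/

open Matrix

theorem Matrix.inv_mulVec_eq_inv_smul_s19 {K n : Type*} [Field K] [Fintype n] [DecidableEq n]
    {M : Matrix n n K} (hM : IsUnit M.det) {x : n → K} {c : K} (hx : M *ᵥ x = c • x) :
    M⁻¹ *ᵥ x = c⁻¹ • x := by
  have key : c • (M⁻¹ *ᵥ x) = x := by
    rw [← mulVec_smul, ← hx, mulVec_mulVec, nonsing_inv_mul _ hM, one_mulVec]
  rcases eq_or_ne c 0 with rfl | hc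
  · obtain rfl : x = 0 := by simpa using key.symm
    simp
  · exact (eq_inv_smul_iff₀ hc).2 key

section SchurComplement

variable {K n : Type*} [Field K] [Fintype n] [DecidableEq n] {k : K} {A B D : Matrix n n K}

theorem schur_inv_mul_mul_inv (hA : IsUnit A.det) (hD : IsUnit D.det)
    (hP : IsUnit (A - k • (B * D⁻¹ * B)).det) (hQ : IsUnit (D - k • (B * A⁻¹ * B)).det) :
    (A - k • (B * D⁻¹ * B))⁻¹ * B * D⁻¹ = A⁻¹ * B * (D - k • (B * A⁻¹ * B))⁻¹ := by
  set P := A - k • (B * D⁻¹ * B)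
  set Q := D - k • (B * A⁻¹ * B)
  have push : B * D⁻¹ * Q = P * A⁻¹ * B := by
    simp only [P, Q, Matrix.mul_sub, Matrix.sub_mul, Matrix.mul_smul, Matrix.smul_mul,
      Matrix.mul_assoc, mul_nonsing_inv_cancel_left _ _ hA, nonsing_inv_mul _ hD, Matrix.mul_one]
  calc P⁻¹ * B * D⁻¹ = P⁻¹ * (B * D⁻¹ * Q) * Q⁻¹ := by
        simp only [Matrix.mul_assoc, mul_nonsing_inv _ hQ, Matrix.mul_one]
    _ = A⁻¹ * B * Q⁻¹ := by
        rw [push]; simp only [← Matrix.mul_assoc, nonsing_inv_mul _ hP, Matrix.one_mul]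

theorem Matrix.IsSymm.schur (hA : A.IsSymm) (hB : B.IsSymm) (hD : D.IsSymm) :
    (A - k • (B * D⁻¹ * B)).IsSymm := by
  simp only [Matrix.IsSymm, transpose_sub, transpose_smul, transpose_mul, transpose_nonsing_inv,
    hA.eq, hB.eq, hD.eq, Matrix.mul_assoc]

theorem transpose_schur_inv_mul_mul_inv (hAs : A.IsSymm) (hBs : B.IsSymm)
    (hDs : D.IsSymm) (hA : IsUnit A.det) (hD : IsUnit D.det)
    (hP : IsUnit (A - k • (B * D⁻¹ * B)).det) (hQ : IsUnit (D - k • (B * A⁻¹ * B)).det) :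
    ((A - k • (B * D⁻¹ * B))⁻¹ * B * D⁻¹)ᵀ = (D - k • (B * A⁻¹ * B))⁻¹ * B * A⁻¹ := by
  rw [schur_inv_mul_mul_inv hD hA hQ hP, transpose_mul, transpose_mul,
    transpose_nonsing_inv, transpose_nonsing_inv, hDs.eq, hBs.eq,
    (hAs.schur hBs hDs).eq]
  exact (Matrix.mul_assoc _ _ _).symm

variable {x y : n → K} {α β b : K}

theorem schur_inv_mulVec_of_swap (hD : IsUnit D.det)
    (hP : IsUnit (A - k • (B * D⁻¹ * B)).det) (hAx : A *ᵥ x = α • x) (hBx : B *ᵥ x = b • y)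
    (hDy : D *ᵥ y = β • y) (hBy : B *ᵥ y = b • x) :
    (A - k • (B * D⁻¹ * B))⁻¹ *ᵥ x = (α - k * b ^ 2 / β)⁻¹ • x := by
  refine inv_mulVec_eq_inv_smul_s19 hP ?_
  rw [sub_mulVec, smul_mulVec, ← mulVec_mulVec, ← mulVec_mulVec, hBx, mulVec_smul,
    inv_mulVec_eq_inv_smul_s19 hD hDy, mulVec_smul, mulVec_smul, hBy, hAx, smul_smul, smul_smul,
    smul_smul, ← sub_smul]
  congr 1
  ring

theorem schur_inv_mulVec_add_coupling_mulVec (τ s : K) (hD : IsUnit D.det)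
    (hP : IsUnit (A - k • (B * D⁻¹ * B)).det) (hAx : A *ᵥ x = α • x) (hBx : B *ᵥ x = b • y)
    (hDy : D *ᵥ y = β • y) (hBy : B *ᵥ y = b • x) :
    (A - k • (B * D⁻¹ * B))⁻¹ *ᵥ (τ • x) +
        (-k • ((A - k • (B * D⁻¹ * B))⁻¹ * B * D⁻¹)) *ᵥ (s • y) =
      ((τ - k * b * s / β) / (α - k * b ^ 2 / β)) • x := by
  simp only [smul_mulVec, mulVec_smul, ← mulVec_mulVec, inv_mulVec_eq_inv_smul_s19 hD hDy, hBy,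
    schur_inv_mulVec_of_swap hD hP hAx hBx hDy hBy, smul_smul, ← add_smul]
  congr 1
  ring

end SchurComplement

section Laminate

/-- Kelvin matrix of a plane tensor with polar moduli `T₀, T₁, R₀` and `R₁ = 0`; `couplingMatrix r`
is the one with `R₁ = r` as its only nonzero modulus, in the frame `Φ₁ = 0`. -/
def squareSymmetricMatrix (T₀ T₁ R₀ : ℝ) : Matrix (Fin 3) (Fin 3) ℝ :=
  !![T₀ + 2*T₁ + R₀, -T₀ + 2*T₁ - R₀, 0;
     -T₀ + 2*T₁ - R₀, T₀ + 2*T₁ + R₀, 0;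
     0, 0, 2*(T₀ - R₀)]

def couplingMatrix (r : ℝ) : Matrix (Fin 3) (Fin 3) ℝ :=
  !![4*r, 0, 0; 0, -4*r, 0; 0, 0, 0]

variable (T₀ T₁ R₀ r : ℝ)

theorem squareSymmetricMatrix_mulVec_iso :
    squareSymmetricMatrix T₀ T₁ R₀ *ᵥ ![1, 1, 0] = (4 * T₁) • ![1, 1, 0] := by
  ext i; fin_cases i <;> simp [squareSymmetricMatrix] <;> ring

theorem squareSymmetricMatrix_mulVec_aniso :
    squareSymmetricMatrix T₀ T₁ R₀ *ᵥ ![1, -1, 0] = (2 * (T₀ + R₀)) • ![1, -1, 0] := by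
  ext i; fin_cases i <;> simp [squareSymmetricMatrix] <;> ring

theorem couplingMatrix_mulVec_iso : couplingMatrix r *ᵥ ![1, 1, 0] = (4 * r) • ![1, -1, 0] := by
  ext i; fin_cases i <;> simp [couplingMatrix]

theorem couplingMatrix_mulVec_aniso : couplingMatrix r *ᵥ ![1, -1, 0] = (4 * r) • ![1, 1, 0] := by
  ext i; fin_cases i <;> simp [couplingMatrix]

theorem isSymm_squareSymmetricMatrix : (squareSymmetricMatrix T₀ T₁ R₀).IsSymm := by
  refine Matrix.IsSymm.ext fun i j => ?_
  fin_cases i <;> fin_cases j <;> rfl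

theorem isSymm_couplingMatrix : (couplingMatrix r).IsSymm := by
  refine Matrix.IsSymm.ext fun i j => ?_
  fin_cases i <;> fin_cases j <;> rfl

theorem det_squareSymmetricMatrix :
    (squareSymmetricMatrix T₀ T₁ R₀).det = 16 * T₁ * (T₀ + R₀) * (T₀ - R₀) := by
  rw [squareSymmetricMatrix, det_fin_three]
  simp
  ring

variable {T₀ T₁ R₀ r}

theorem add_ne_zero_of_isUnit_det_squareSymmetricMatrix
    (h : IsUnit (squareSymmetricMatrix T₀ T₁ R₀).det) : T₀ + R₀ ≠ 0 := by
  intro h0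
  simpa [det_squareSymmetricMatrix, h0] using h.ne_zero

theorem isotropic_coefficient_eq (hR : T₀ + R₀ ≠ 0) (τ s : ℝ) :
    (τ - 3 * (4 * r) * s / (2 * (T₀ + R₀))) / (4 * T₁ - 3 * (4 * r) ^ 2 / (2 * (T₀ + R₀))) =
      ((R₀ + T₀) * τ - 6 * r * s) / (4 * ((R₀ + T₀) * T₁ - 6 * r ^ 2)) := by
  rw [show 4 * T₁ - 3 * (4 * r) ^ 2 / (2 * (T₀ + R₀)) =
    4 * ((R₀ + T₀) * T₁ - 6 * r ^ 2) / (T₀ + R₀) by field_simp; ring]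
  field_simp
  ring

end Laminate

theorem cross_ply_coupled_laminate_thermoelastic_general
    (T₀ T₁ R₀A R₀D R₁B Tγ ρ : ℝ) (h : ℝ)
    (ε : ℝ) :
    let A : Matrix (Fin 3) (Fin 3) ℝ :=
      !![T₀ + 2*T₁ + R₀A, -T₀ + 2*T₁ - R₀A, 0;
         -T₀ + 2*T₁ - R₀A, T₀ + 2*T₁ + R₀A, 0;
         0, 0, 2*(T₀ - R₀A)]
    let D : Matrix (Fin 3) (Fin 3) ℝ :=
      !![T₀ + 2*T₁ + R₀D, -T₀ + 2*T₁ - R₀D, 0;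
         -T₀ + 2*T₁ - R₀D, T₀ + 2*T₁ + R₀D, 0;
         0, 0, 2*(T₀ - R₀D)]
    let B : Matrix (Fin 3) (Fin 3) ℝ :=
      !![4*R₁B, 0, 0; 0, -4*R₁B, 0; 0, 0, 0]
    let U : Fin 3 → ℝ := ![Tγ, Tγ, 0]
    let W : Fin 3 → ℝ := ![Tγ, Tγ, 0]
    let V : Fin 3 → ℝ := ![ε * ρ * R₁B, -(ε * ρ * R₁B), 0]
    let calA := (A - (3 : ℝ) • (B * D⁻¹ * B))⁻¹
    let calB := (-3 : ℝ) • (calA * B * D⁻¹)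
    let calD := (D - (3 : ℝ) • (B * A⁻¹ * B))⁻¹
    let u := calA.mulVec U + calB.mulVec V
    let v₁ := (2 / h) • (calB.transpose.mulVec U + (3 : ℝ) • calD.mulVec V)
    let v₂ := (h / 6) • ((3 : ℝ) • calA.mulVec V + calB.mulVec W)
    let w := calB.transpose.mulVec V + calD.mulVec W
    IsUnit A.det → IsUnit D.det →
    IsUnit (A - (3 : ℝ) • (B * D⁻¹ * B)).det →
    IsUnit (D - (3 : ℝ) • (B * A⁻¹ * B)).det →
      (u = (((R₀D + T₀) * Tγ - 6 * ε * R₁B ^ 2 * ρ) /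
          (4 * ((R₀D + T₀) * T₁ - 6 * R₁B ^ 2))) • (![1, 1, 0] : Fin 3 → ℝ) ∧
        w = (((R₀A + T₀) * Tγ - 6 * ε * R₁B ^ 2 * ρ) /
          (4 * ((R₀A + T₀) * T₁ - 6 * R₁B ^ 2))) • (![1, 1, 0] : Fin 3 → ℝ) ∧
        v₁ 0 + v₁ 1 = 0 ∧ v₁ 2 = 0 ∧ v₂ 0 + v₂ 1 = 0 ∧ v₂ 2 = 0) := by
  intro A D B U W V calA calB calD u v₁ v₂ w hA hD hMA hMD
  have hU : U = Tγ • ![1, 1, 0] := by ext i; fin_cases i <;> simp [U]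
  have hV : V = (ε * ρ * R₁B) • ![1, -1, 0] := by ext i; fin_cases i <;> simp [V]
  have hcalBt : calBᵀ = (-3 : ℝ) • (calD * B * A⁻¹) := by
    rw [transpose_smul]
    exact congrArg _ (transpose_schur_inv_mul_mul_inv (isSymm_squareSymmetricMatrix _ _ _)
      (isSymm_couplingMatrix _) (isSymm_squareSymmetricMatrix _ _ _) hA hD hMA hMD)
  have hiso := squareSymmetricMatrix_mulVec_iso T₀ T₁
  have haniso := squareSymmetricMatrix_mulVec_aniso T₀ T₁
  have hBiso := couplingMatrix_mulVec_iso R₁B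
  have hBaniso := couplingMatrix_mulVec_aniso R₁B
  have hv₁ : calBᵀ *ᵥ U + (3 : ℝ) • calD *ᵥ V = _ := Eq.trans (by
      rw [hcalBt, hU, hV, add_comm, ← mulVec_smul, smul_smul])
    (schur_inv_mulVec_add_coupling_mulVec _ _ hA hMD (haniso _) hBaniso (hiso _) hBiso)
  have hv₂ : (3 : ℝ) • calA *ᵥ V + calB *ᵥ W = _ := Eq.trans (by
      rw [show W = U from rfl, hU, hV, ← mulVec_smul, smul_smul])
    (schur_inv_mulVec_add_coupling_mulVec _ _ hD hMA (haniso _) hBaniso (hiso _) hBiso)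
  refine ⟨?_, ?_, ?_, ?_, ?_, ?_⟩
  · show calA *ᵥ U + calB *ᵥ V = _
    rw [hU, hV]
    refine (schur_inv_mulVec_add_coupling_mulVec _ _ hD hMA (hiso _) hBiso (haniso _)
      hBaniso).trans ?_
    rw [isotropic_coefficient_eq (add_ne_zero_of_isUnit_det_squareSymmetricMatrix hD)]
    congr 2
    ring
  · show calBᵀ *ᵥ V + calD *ᵥ W = _
    rw [hcalBt, add_comm, show W = U from rfl, hU, hV]
    refine (schur_inv_mulVec_add_coupling_mulVec _ _ hA hMD (hiso _) hBiso (haniso _)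
      hBaniso).trans ?_
    rw [isotropic_coefficient_eq (add_ne_zero_of_isUnit_det_squareSymmetricMatrix hA)]
    congr 2
    ring
  all_goals simp only [v₁, v₂, hv₁, hv₂]; simp

theorem cross_ply_coupled_laminate_thermoelastic
    (T₀ T₁ R₀A R₀D R₁B Tγ ρ : ℝ) (h : ℝ) (hh : 0 < h)
    (ε : ℝ) (hε : ε = -1 ∨ ε = 1)
    (hden1 : (R₀A + T₀) * T₁ - 6 * R₁B ^ 2 ≠ 0)
    (hden2 : (R₀D + T₀) * T₁ - 6 * R₁B ^ 2 ≠ 0) :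
    let A : Matrix (Fin 3) (Fin 3) ℝ :=
      !![T₀ + 2*T₁ + R₀A, -T₀ + 2*T₁ - R₀A, 0;
         -T₀ + 2*T₁ - R₀A, T₀ + 2*T₁ + R₀A, 0;
         0, 0, 2*(T₀ - R₀A)]
    let D : Matrix (Fin 3) (Fin 3) ℝ :=
      !![T₀ + 2*T₁ + R₀D, -T₀ + 2*T₁ - R₀D, 0;
         -T₀ + 2*T₁ - R₀D, T₀ + 2*T₁ + R₀D, 0;
         0, 0, 2*(T₀ - R₀D)]
    let B : Matrix (Fin 3) (Fin 3) ℝ :=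
      !![4*R₁B, 0, 0; 0, -4*R₁B, 0; 0, 0, 0]
    let U : Fin 3 → ℝ := ![Tγ, Tγ, 0]
    let W : Fin 3 → ℝ := ![Tγ, Tγ, 0]
    let V : Fin 3 → ℝ := ![ε * ρ * R₁B, -(ε * ρ * R₁B), 0]
    let calA := (A - (3 : ℝ) • (B * D⁻¹ * B))⁻¹
    let calB := (-3 : ℝ) • (calA * B * D⁻¹)
    let calD := (D - (3 : ℝ) • (B * A⁻¹ * B))⁻¹
    let u := calA.mulVec U + calB.mulVec V
    let v₁ := (2 / h) • (calB.transpose.mulVec U + (3 : ℝ) • calD.mulVec V)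
    let v₂ := (h / 6) • ((3 : ℝ) • calA.mulVec V + calB.mulVec W)
    let w := calB.transpose.mulVec V + calD.mulVec W
    IsUnit A.det → IsUnit D.det →
    IsUnit (A - (3 : ℝ) • (B * D⁻¹ * B)).det →
    IsUnit (D - (3 : ℝ) • (B * A⁻¹ * B)).det →
      (u = (((R₀D + T₀) * Tγ - 6 * ε * R₁B ^ 2 * ρ) /
          (4 * ((R₀D + T₀) * T₁ - 6 * R₁B ^ 2))) • (![1, 1, 0] : Fin 3 → ℝ) ∧
        w = (((R₀A + T₀) * Tγ - 6 * ε * R₁B ^ 2 * ρ) /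
          (4 * ((R₀A + T₀) * T₁ - 6 * R₁B ^ 2))) • (![1, 1, 0] : Fin 3 → ℝ) ∧
        v₁ 0 + v₁ 1 = 0 ∧ v₁ 2 = 0 ∧ v₂ 0 + v₂ 1 = 0 ∧ v₂ 2 = 0) :=
  cross_ply_coupled_laminate_thermoelastic_general T₀ T₁ R₀A R₀D R₁B Tγ ρ h ε
end
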